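/- arXiv:1308.5534 — 3 statements merged into one kernel-verified Lean document; each statement's English description precedes it below -/
import Mathlib

section
/- The sequence b_n is asymptotically equal to (C^{−1} log n)^{1/τ}, i.e. lim_n b_n / (C^{−1} log n)^{1/τ} = 1. -/
/-!
Taking logarithms in `K bₙ^α exp(-C bₙ^τ) = 1/n` gives
`C⁻¹ log n = bₙ^τ - C⁻¹ (log K + α log bₙ)`. Monotonicity forces `bₙ → ∞`, and a logarithm is
negligible against a positive power, so `bₙ^τ ~ C⁻¹ log n`; taking `1/τ`-th powers preserves
asymptotic equivalence.
-/

open Filter Set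

open Real Asymptotics

noncomputable def weibullTail (K C α τ x : ℝ) : ℝ := K * x ^ α * exp (-C * x ^ τ)

section WeibullTail

variable {K C α τ x : ℝ}

lemma weibullTail_pos (hK : 0 < K) (hx : 0 < x) : 0 < weibullTail K C α τ x := by
  unfold weibullTail
  positivity

lemma log_weibullTail (hK : 0 < K) (hx : 0 < x) :
    log (weibullTail K C α τ x) = log K + α * log x - C * x ^ τ := by
  unfold weibullTail
  rw [log_mul (by positivity) (exp_ne_zero _), log_mul hK.ne' (by positivity), log_exp,
    log_rpow hx]
  ring

end WeibullTail

lemma tendsto_atTop_of_strictAntiOn_of_tendsto_zero {ι X : Type*} [LinearOrder X] {l : Filter ι}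
    {f : X → ℝ} {a : X} {b : ι → X} (hf : StrictAntiOn f (Ici a)) (hpos : ∀ x, a ≤ x → 0 < f x)
    (hba : ∀ᶠ i in l, a ≤ b i) (hfb : Tendsto (f ∘ b) l (nhds 0)) : Tendsto b l atTop := by
  refine tendsto_atTop.2 fun M => ?_
  have haM : a ≤ max M a := le_max_right M a
  filter_upwards [hba, hfb.eventually_lt_const (hpos _ haM)] with i hai hfi
  exact (le_max_left M a).trans ((hf.lt_iff_gt hai haM).1 hfi).le

lemma isLittleO_const_add_mul_log_rpow (a c : ℝ) {τ : ℝ} (hτ : 0 < τ) :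
    (fun x => a + c * log x) =o[atTop] fun x => x ^ τ := by
  have hconst : (fun _ : ℝ => a) =o[atTop] fun x => x ^ τ :=
    (isLittleO_const_left.2 <| Or.inr <|
      tendsto_norm_atTop_atTop.comp (tendsto_rpow_atTop hτ))
  exact hconst.add ((isLittleO_log_rpow_atTop hτ).const_mul_left c)

theorem stmt_7_general (K C α τ x₁ : ℝ) (hK : 0 < K) (hC : 0 < C) (hτ : 1 ≤ τ)
    (hx₁ : 0 < x₁)
    (hanti : StrictAntiOn (fun x : ℝ => K * x ^ α * Real.exp (-C * x ^ τ)) (Set.Ici x₁))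
    (b : ℕ → ℝ)
    (hb : ∀ᶠ n : ℕ in atTop,
      x₁ ≤ b n ∧ K * b n ^ α * Real.exp (-C * b n ^ τ) = 1 / (n : ℝ)) :
    Tendsto (fun n : ℕ => b n / (C⁻¹ * Real.log n) ^ (1 / τ)) atTop (nhds 1) := by
  have hτ0 : 0 < τ := by linarith
  have hbpos : ∀ᶠ n in atTop, 0 < b n := hb.mono fun n hn => hx₁.trans_le hn.1
  have hbtop : Tendsto b atTop atTop :=
    tendsto_atTop_of_strictAntiOn_of_tendsto_zero (f := weibullTail K C α τ) hanti
      (fun x hx => weibullTail_pos hK (hx₁.trans_le hx)) (hb.mono fun n hn => hn.1)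
      (tendsto_one_div_atTop_nhds_zero_nat.congr' (hb.mono fun n hn => hn.2.symm))
  have hlog : ∀ᶠ n in atTop,
      b n ^ τ - C⁻¹ * (log K + α * log (b n)) = C⁻¹ * log n := by
    filter_upwards [hb, hbpos] with n hn hbn
    have h := log_weibullTail (C := C) (α := α) (τ := τ) hK hbn
    rw [weibullTail, hn.2, one_div, log_inv] at h
    field_simp
    linarith
  have hsmall : (fun n => C⁻¹ * (log K + α * log (b n))) =o[atTop] fun n => b n ^ τ :=
    ((isLittleO_const_add_mul_log_rpow (log K) α hτ0).const_mul_left C⁻¹).comp_tendsto hbtop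
  have hequiv : (fun n => b n ^ τ) ~[atTop] fun n => C⁻¹ * log n :=
    (IsEquivalent.refl.sub_isLittleO hsmall).symm.congr_right hlog
  have hroot : b ~[atTop] fun n => (C⁻¹ * log n) ^ (1 / τ) := by
    refine (hequiv.rpow (fun n => by positivity) (r := 1 / τ)).congr_left ?_
    filter_upwards [hbpos] with n hbn
    simp only [Pi.pow_apply, one_div, rpow_rpow_inv hbn.le hτ0.ne']
  refine (isEquivalent_iff_tendsto_one ?_).1 hroot
  filter_upwards [eventually_gt_atTop 1] with n hn
  have : 0 < log n := log_pos (by exact_mod_cast hn)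
  positivity

/-- The centering constant `b_n` is asymptotically equal to `(C⁻¹ log n)^{1/τ}`:
`lim_n b_n / (C⁻¹ log n)^{1/τ} = 1`. -/
theorem stmt_7 (K C α τ x₁ : ℝ) (hK : 0 < K) (hC : 0 < C) (hα : 0 < α) (hτ : 1 ≤ τ)
    (hx₁ : 0 < x₁)
    (hanti : StrictAntiOn (fun x : ℝ => K * x ^ α * Real.exp (-C * x ^ τ)) (Set.Ici x₁))
    (hlim : Tendsto (fun x : ℝ => K * x ^ α * Real.exp (-C * x ^ τ)) atTop (nhds 0))
    (hrange : ∀ x ≥ x₁, K * x ^ α * Real.exp (-C * x ^ τ) ∈ Set.Ioc (0 : ℝ) 1)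
    (b : ℕ → ℝ)
    (hb : ∀ᶠ n : ℕ in atTop,
      x₁ ≤ b n ∧ K * b n ^ α * Real.exp (-C * b n ^ τ) = 1 / (n : ℝ)) :
    Tendsto (fun n : ℕ => b n / (C⁻¹ * Real.log n) ^ (1 / τ)) atTop (nhds 1) :=
  stmt_7_general K C α τ x₁ hK hC hτ hx₁ hanti b hb
end

section
/- Set N₁(n) = log(K n / C^{α/τ}) and N₂(n) = log(N₁(n)). Then there exist a constant M > 0 and an index N such that for all n ≥ N, |C b_n^τ − N₁(n) − (α/τ) N₂(n) − (α/τ)² N₂(n)/N₁(n)| ≤ M (N₂(n)/N₁(n))². That is, b_n = C^{−1/τ} (N₁ + (α/τ) N₂ + (α/τ)² N₂/N₁ + O((N₂/N₁)²))^{1/τ}. -/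
open Filter Set

lemma aux_log_bound {u : ℝ} (hu0 : 0 ≤ u) (hu : u ≤ 1/2) :
    |Real.log (1 + u) - u| ≤ 2 * u ^ 2 := by
  have h1 : |(-u)| < 1 := by rw [abs_neg, abs_of_nonneg hu0]; linarith
  have h := Real.abs_log_sub_add_sum_range_le h1 1
  simp [Finset.sum_range_one, abs_neg, abs_of_nonneg hu0] at h
  have h2 : u ^ 2 / (1 - u) ≤ 2 * u ^ 2 := by
    rw [div_le_iff₀ (by linarith)]
    nlinarith [sq_nonneg u]
  calc |Real.log (1 + u) - u| = |(-u) + Real.log (1 + u)| := by congr 1; ring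
    _ ≤ u ^ 2 / (1 - u) := h
    _ ≤ 2 * u ^ 2 := h2

lemma stmt13_aux (a n₁ n₂ y : ℝ) (ha : 0 < a)
    (heq : y = n₁ + a * Real.log y)
    (hy1 : 1 ≤ y)
    (hN₁ : y / 2 ≤ n₁)
    (hN₂def : n₂ = Real.log n₁)
    (hN₂1 : 1 ≤ n₂)
    (hsm : 2 * a * (n₂ / n₁) ≤ 1 / 2) :
    |y - n₁ - a * n₂ - a ^ 2 * n₂ / n₁| ≤ 12 * a ^ 3 * (n₂ / n₁) ^ 2 := by
  have hN₁pos : 0 < n₁ := by linarith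
  set L := Real.log y with hL
  have hL0 : 0 ≤ L := Real.log_nonneg hy1
  set u := a * L / n₁ with hu
  have hu0 : 0 ≤ u := by positivity
  set v := n₂ / n₁ with hv
  have hv0 : 0 ≤ v := by positivity
  -- L ≤ 2 n₂
  have hy2 : y ≤ 2 * n₁ := by linarith
  have hlog2 : Real.log 2 ≤ 1 := by
    have := Real.log_le_sub_one_of_pos (by norm_num : (0:ℝ) < 2); linarith
  have hL2 : L ≤ 2 * n₂ := by
    have h1 : L ≤ Real.log (2 * n₁) := Real.log_le_log (by linarith) hy2
    rw [Real.log_mul (by norm_num) hN₁pos.ne'] at h1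
    rw [hN₂def]; rw [hN₂def] at hN₂1; linarith
  have hu_le : u ≤ 2 * a * v := by
    rw [hu, hv]
    rw [div_le_iff₀ hN₁pos]
    have h9 : 2 * a * (n₂ / n₁) * n₁ = 2 * a * n₂ := by field_simp
    rw [h9]; nlinarith
  have hu_half : u ≤ 1 / 2 := le_trans hu_le hsm
  -- 1 + u = y / n₁
  have hyu : y / n₁ = 1 + u := by
    rw [hu]; field_simp; linarith [heq]
  have hlogdiff : L - n₂ = Real.log (1 + u) := by
    rw [← hyu, Real.log_div (by linarith) hN₁pos.ne', hN₂def]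
  set r := (L - n₂) - u with hr
  have hrb : |r| ≤ 2 * u ^ 2 := by
    rw [hr, hlogdiff]; exact aux_log_bound hu0 hu_half
  have habs : |L - n₂| ≤ 2 * u := by
    have : |L - n₂| ≤ u + 2 * u ^ 2 := by
      rw [show L - n₂ = u + r by rw [hr]; ring]
      calc |u + r| ≤ |u| + |r| := abs_add_le _ _
        _ ≤ u + 2 * u ^ 2 := by rw [abs_of_nonneg hu0]; linarith [hrb]
    nlinarith
  have hT : y - n₁ - a * n₂ - a ^ 2 * n₂ / n₁ = a ^ 2 * (L - n₂) / n₁ + a * r := by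
    rw [hr, hu]; field_simp; nlinarith [heq]
  have hinv : 1 / n₁ ≤ v := by
    rw [hv, div_le_div_iff₀ hN₁pos hN₁pos]; nlinarith
  calc |y - n₁ - a * n₂ - a ^ 2 * n₂ / n₁|
      = |a ^ 2 * (L - n₂) / n₁ + a * r| := by rw [hT]
    _ ≤ |a ^ 2 * (L - n₂) / n₁| + |a * r| := abs_add_le _ _
    _ = a ^ 2 * |L - n₂| / n₁ + a * |r| := by
        rw [abs_div, abs_mul, abs_mul, abs_of_nonneg (sq_nonneg a), abs_of_pos hN₁pos,
          abs_of_pos ha]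
    _ ≤ a ^ 2 * (2 * u) / n₁ + a * (2 * u ^ 2) := by gcongr
    _ = 2 * a ^ 2 * u * (1 / n₁) + 2 * a * u ^ 2 := by ring
    _ ≤ 2 * a ^ 2 * (2 * a * v) * v + 2 * a * (2 * a * v) ^ 2 := by gcongr
    _ = 12 * a ^ 3 * v ^ 2 := by ring


/-- Expansion via the Comtet expansion: with `N₁(n) = log(Kn/C^{α/τ})` and
`N₂(n) = log(N₁(n))`, the centering constant satisfies
`C b_n^τ = N₁ + (α/τ) N₂ + (α/τ)² N₂/N₁ + O((N₂/N₁)²)`. -/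
theorem stmt_13 (K C α τ x₁ : ℝ) (hK : 0 < K) (hC : 0 < C) (hα : 0 < α) (hτ : 1 ≤ τ)
    (hx₁ : 0 < x₁)
    (hanti : StrictAntiOn (fun x : ℝ => K * x ^ α * Real.exp (-C * x ^ τ)) (Set.Ici x₁))
    (hlim : Tendsto (fun x : ℝ => K * x ^ α * Real.exp (-C * x ^ τ)) atTop (nhds 0))
    (hrange : ∀ x ≥ x₁, K * x ^ α * Real.exp (-C * x ^ τ) ∈ Set.Ioc (0 : ℝ) 1)
    (b : ℕ → ℝ)
    (hb : ∀ᶠ n : ℕ in atTop,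
      x₁ ≤ b n ∧ K * b n ^ α * Real.exp (-C * b n ^ τ) = 1 / (n : ℝ))
    (N₁ N₂ : ℕ → ℝ)
    (hN₁ : ∀ n : ℕ, N₁ n = Real.log (K * n / C ^ (α / τ)))
    (hN₂ : ∀ n : ℕ, N₂ n = Real.log (N₁ n)) :
    ∃ M > (0 : ℝ), ∃ N : ℕ, ∀ n ≥ N,
      |C * b n ^ τ - N₁ n - α / τ * N₂ n - (α / τ) ^ 2 * N₂ n / N₁ n|
        ≤ M * (N₂ n / N₁ n) ^ 2 := by
  have hτ0 : 0 < τ := lt_of_lt_of_le one_pos hτ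
  set a := α / τ with ha_def
  have ha : 0 < a := div_pos hα hτ0
  have haτ : a * τ = α := by rw [ha_def]; field_simp
  set y : ℕ → ℝ := fun n => C * b n ^ τ with hy_def
  -- N₁ tends to atTop
  have hN₁top : Tendsto N₁ atTop atTop := by
    have h1 : Tendsto (fun n : ℕ => K * (n : ℝ) / C ^ a) atTop atTop := by
      apply Tendsto.atTop_div_const (by positivity)
      exact (tendsto_natCast_atTop_atTop (R := ℝ)).const_mul_atTop hK
    exact (Real.tendsto_log_atTop.comp h1).congr fun n => (hN₁ n).symm
  have hN₂top : Tendsto N₂ atTop atTop :=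
    (Real.tendsto_log_atTop.comp hN₁top).congr fun n => (hN₂ n).symm
  -- N₂/N₁ → 0
  have hratio : Tendsto (fun n => N₂ n / N₁ n) atTop (nhds 0) := by
    have h1 : Tendsto (fun x : ℝ => Real.log x / x) atTop (nhds 0) :=
      Real.isLittleO_log_id_atTop.tendsto_div_nhds_zero
    have h2 := h1.comp hN₁top
    exact h2.congr fun n => by simp only [Function.comp_apply, hN₂ n]
  -- the fixed point equation
  have heqn : ∀ᶠ n : ℕ in atTop, 0 < b n ∧ y n = N₁ n + a * Real.log (y n) := by
    filter_upwards [hb, eventually_ge_atTop 1] with n hbn hn1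
    have hb0 : 0 < b n := hx₁.trans_le hbn.1
    have hn0 : (0 : ℝ) < n := by exact_mod_cast hn1
    refine ⟨hb0, ?_⟩
    have hlog := congrArg Real.log hbn.2
    rw [Real.log_mul (by positivity) (Real.exp_ne_zero _),
      Real.log_mul hK.ne' (Real.rpow_pos_of_pos hb0 α).ne',
      Real.log_rpow hb0, Real.log_exp, one_div, Real.log_inv] at hlog
    have hlogy : Real.log (y n) = Real.log C + τ * Real.log (b n) := by
      rw [hy_def]
      rw [Real.log_mul hC.ne' (Real.rpow_pos_of_pos hb0 τ).ne', Real.log_rpow hb0]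
    have hN₁n : N₁ n = Real.log K + Real.log n - a * Real.log C := by
      rw [hN₁ n, Real.log_div (by positivity) (Real.rpow_pos_of_pos hC a).ne',
        Real.log_mul hK.ne' hn0.ne', Real.log_rpow hC]
    rw [hlogy, hN₁n]
    have h3 : a * (Real.log C + τ * Real.log (b n)) =
        a * Real.log C + α * Real.log (b n) := by rw [← haτ]; ring
    rw [h3]
    show C * b n ^ τ = _
    linarith [hlog]
  -- y tends to atTop
  have hytop : Tendsto y atTop atTop := by
    have hev : ∀ᶠ n : ℕ in atTop,
        N₁ n + a * Real.log (C * x₁ ^ τ) ≤ y n := by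
      filter_upwards [hb, heqn] with n hbn hyn
      have hb0 : 0 < b n := hx₁.trans_le hbn.1
      have hyge : C * x₁ ^ τ ≤ y n := by
        have := Real.rpow_le_rpow hx₁.le hbn.1 hτ0.le
        rw [hy_def]
        exact mul_le_mul_of_nonneg_left this hC.le
      have hloggy : Real.log (C * x₁ ^ τ) ≤ Real.log (y n) :=
        Real.log_le_log (by positivity) hyge
      nlinarith [hyn.2]
    exact tendsto_atTop_mono' atTop hev
      (tendsto_atTop_add_const_right _ _ hN₁top)
  -- eventually a * log y ≤ y / 2
  have hsmall : ∀ᶠ x : ℝ in atTop, a * Real.log x ≤ x / 2 := by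
    have h1 : Tendsto (fun x : ℝ => Real.log x / x) atTop (nhds 0) :=
      Real.isLittleO_log_id_atTop.tendsto_div_nhds_zero
    have h2 := h1.eventually (eventually_le_nhds (show (0:ℝ) < 1 / (2 * a) by positivity))
    filter_upwards [h2, eventually_gt_atTop (0 : ℝ)] with x hx hx0
    rw [div_le_iff₀ hx0] at hx
    calc a * Real.log x ≤ a * (1 / (2 * a) * x) := mul_le_mul_of_nonneg_left hx ha.le
      _ = x / 2 := by field_simp [ha.ne']
  -- combine everything
  refine ⟨12 * a ^ 3, by positivity, ?_⟩
  have hfinal : ∀ᶠ n : ℕ in atTop,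
      |y n - N₁ n - a * N₂ n - a ^ 2 * N₂ n / N₁ n| ≤ 12 * a ^ 3 * (N₂ n / N₁ n) ^ 2 := by
    filter_upwards [heqn, hytop.eventually hsmall, hytop.eventually_ge_atTop 1,
      hN₂top.eventually_ge_atTop 1,
      hratio.eventually (eventually_le_nhds (show (0:ℝ) < 1 / (4 * a) by positivity))]
      with n hyn hsm hy1 hn2 hr
    have hN1half : y n / 2 ≤ N₁ n := by linarith [hyn.2]
    have hsm' : 2 * a * (N₂ n / N₁ n) ≤ 1 / 2 := by
      have : (2 * a) * (N₂ n / N₁ n) ≤ (2 * a) * (1 / (4 * a)) := by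
        apply mul_le_mul_of_nonneg_left hr (by positivity)
      calc 2 * a * (N₂ n / N₁ n) ≤ (2 * a) * (1 / (4 * a)) := this
        _ = 1 / 2 := by field_simp; ring
    exact stmt13_aux a (N₁ n) (N₂ n) (y n) ha hyn.2 hy1 hN1half (hN₂ n) hn2 hsm'
  obtain ⟨N, hN⟩ := eventually_atTop.mp hfinal
  exact ⟨N, fun n hn => hN n hn⟩
end

section
/- For every x ∈ ℝ there exist a constant M > 0 and an index N such that for all n ≥ N, |n · K (a_n x + b_n)^α exp(−C (a_n x + b_n)^τ) − e^{−x}| ≤ M e^{−x} / b_n^τ. That is, K(a_n x + b_n)^α exp(−C(a_n x + b_n)^τ) = (e^{−x}/n)(1 + O(1/b_n^τ)). -/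
open Filter Set Topology

/-!
Write the tail as `K x^α e^{-C x^τ} = K e^{g(x)}` with `g(t) = α log t - C t^τ`. The normalisation
`n K e^{g(b_n)} = 1` turns `n K e^{g(a_n x + b_n)}` into `e^{g(a_n x + b_n) - g(b_n)}`, and
`a_n = -1 / g'(b_n)`, so the exponent is `-x` plus a second-order Taylor remainder. On
`[b_n/2, 2 b_n]` we have `|g''| = O(b_n^{τ-2})` while `a_n = O(b_n^{1-τ})`, so the remainder is
`O(b_n^{τ-2} · b_n^{2-2τ}) = O(b_n^{-τ})`. Monotonicity of the tail forces `b_n → ∞`, so the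
remainder is eventually at most `1`, where `|e^ε - 1| ≤ 2|ε|`.
-/

lemma tendsto_atTop_of_antitoneOn_of_tendsto_zero {ι : Type*} {l : Filter ι} {f : ℝ → ℝ}
    {x₁ : ℝ} {b : ι → ℝ} (hf : AntitoneOn f (Ici x₁)) (hpos : ∀ x ≥ x₁, 0 < f x)
    (hb : ∀ᶠ i in l, x₁ ≤ b i) (hfb : Tendsto (f ∘ b) l (𝓝 0)) : Tendsto b l atTop := by
  refine tendsto_atTop.2 fun R => ?_
  have hR : x₁ ≤ max R x₁ := le_max_right _ _
  filter_upwards [hb, hfb.eventually (eventually_lt_nhds (hpos _ hR))] with i hbi hlt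
  by_contra! h
  exact (hf hbi hR (h.trans_le (le_max_left _ _)).le).not_gt hlt

lemma abs_sub_sub_mul_deriv_le {g g' g'' : ℝ → ℝ} {b r L u : ℝ}
    (hg : ∀ t ∈ Icc (b - r) (b + r), HasDerivAt g (g' t) t)
    (hg' : ∀ t ∈ Icc (b - r) (b + r), HasDerivAt g' (g'' t) t)
    (hL : ∀ t ∈ Icc (b - r) (b + r), |g'' t| ≤ L) (hu : |u - b| ≤ r) :
    |g u - g b - (u - b) * g' b| ≤ L * r ^ 2 := by
  have hs : Convex ℝ (Icc (b - r) (b + r)) := convex_Icc _ _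
  have mem : ∀ {t}, |t - b| ≤ r → t ∈ Icc (b - r) (b + r) := fun h => by
    rw [abs_le] at h; constructor <;> linarith
  have hr : 0 ≤ r := (abs_nonneg _).trans hu
  have hb := mem (by rwa [sub_self, abs_zero])
  have hL0 : 0 ≤ L := (abs_nonneg _).trans (hL b hb)
  have hg'_lip : ∀ t ∈ Icc (b - r) (b + r), ‖g' t - g' b‖ ≤ L * r := fun t ht => by
    have := hs.norm_image_sub_le_of_norm_hasDerivWithin_le
      (fun y hy => (hg' y hy).hasDerivWithinAt) hL hb ht
    refine this.trans (mul_le_mul_of_nonneg_left ?_ hL0)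
    rw [Real.norm_eq_abs, abs_le]; constructor <;> linarith [ht.1, ht.2]
  have := hs.norm_image_sub_le_of_norm_hasDerivWithin_le (f := fun t => g t - t * g' b)
    (fun y hy => ((hg y hy).sub (hasDerivAt_mul_const (g' b))).hasDerivWithinAt) hg'_lip hb (mem hu)
  simp only [Real.norm_eq_abs] at this
  calc |g u - g b - (u - b) * g' b| = |g u - u * g' b - (g b - b * g' b)| := by ring_nf
    _ ≤ L * r * |u - b| := this
    _ ≤ L * r * r := by gcongr
    _ = L * r ^ 2 := by ring

lemma rpow_le_of_mem_Icc_half_two {b t : ℝ} (p : ℝ) (hb : 0 < b) (ht : t ∈ Icc (b / 2) (2 * b)) :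
    t ^ p ≤ (2 ^ (-p) + 2 ^ p) * b ^ p := by
  have h2p : (0 : ℝ) < 2 ^ p := by positivity
  have h2np : (0 : ℝ) < 2 ^ (-p) := by positivity
  have hbp : 0 < b ^ p := by positivity
  rcases le_total 0 p with hp | hp
  · calc t ^ p ≤ (2 * b) ^ p := Real.rpow_le_rpow (by linarith [ht.1]) ht.2 hp
      _ = 2 ^ p * b ^ p := Real.mul_rpow zero_le_two hb.le
      _ ≤ _ := by nlinarith
  · calc t ^ p ≤ (b / 2) ^ p := Real.rpow_le_rpow_of_nonpos (by positivity) ht.1 hp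
      _ = 2 ^ (-p) * b ^ p := by
        rw [Real.div_rpow hb.le zero_le_two, Real.rpow_neg zero_le_two]; ring
      _ ≤ _ := by nlinarith

section Weibull

variable (C α τ : ℝ)

noncomputable def weibullExponent (t : ℝ) : ℝ := α * Real.log t - C * t ^ τ

noncomputable def weibullExponentDeriv (t : ℝ) : ℝ := α / t - C * τ * t ^ (τ - 1)

noncomputable def weibullCurvatureBound : ℝ := 4 * α + C * τ * (τ - 1) * (2 ^ (2 - τ) + 2 ^ (τ - 2))

variable {C α τ}

lemma hasDerivAt_weibullExponent {t : ℝ} (ht : 0 < t) :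
    HasDerivAt (weibullExponent C α τ) (weibullExponentDeriv C α τ t) t := by
  have := ((Real.hasDerivAt_log ht.ne').const_mul α).sub
    ((Real.hasDerivAt_rpow_const (p := τ) (Or.inl ht.ne')).const_mul C)
  refine this.congr_deriv ?_
  simp only [weibullExponentDeriv]; ring

lemma hasDerivAt_weibullExponentDeriv {t : ℝ} (ht : 0 < t) :
    HasDerivAt (weibullExponentDeriv C α τ) (-α / t ^ 2 - C * τ * (τ - 1) * t ^ (τ - 2)) t := by
  have := ((hasDerivAt_inv ht.ne').const_mul α).sub
    ((Real.hasDerivAt_rpow_const (p := τ - 1) (Or.inl ht.ne')).const_mul (C * τ))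
  have hfun : weibullExponentDeriv C α τ = fun s => α * s⁻¹ - C * τ * s ^ (τ - 1) := by
    ext s; simp only [weibullExponentDeriv, div_eq_mul_inv]
  rw [hfun]
  refine this.congr_deriv ?_
  rw [show τ - 1 - 1 = τ - 2 by ring]; ring

lemma abs_weibullExponent_deriv2_le (hC : 0 ≤ C) (hα : 0 ≤ α) (hτ : 1 ≤ τ) {b t : ℝ}
    (hb : 1 ≤ b) (ht : t ∈ Icc (b / 2) (2 * b)) :
    |-α / t ^ 2 - C * τ * (τ - 1) * t ^ (τ - 2)| ≤
      weibullCurvatureBound C α τ * b ^ (τ - 2) := by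
  have hb0 : 0 < b := by linarith
  have ht0 : 0 < t := by linarith [ht.1]
  have hinv : 1 / t ^ 2 ≤ 4 * b ^ (τ - 2) := by
    have h1 : 1 / t ^ 2 ≤ 4 * (1 / b ^ 2) := by
      rw [div_le_iff₀ (by positivity)]
      field_simp
      nlinarith [ht.1]
    have h2 : 1 / b ^ 2 ≤ b ^ (τ - 2) := by
      rw [← Real.rpow_natCast, one_div, ← Real.rpow_neg hb0.le]
      exact Real.rpow_le_rpow_of_exponent_le hb (by push_cast; linarith)
    linarith
  have hpow := rpow_le_of_mem_Icc_half_two (τ - 2) hb0 ht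
  rw [neg_sub] at hpow
  have hCτ : 0 ≤ C * τ * (τ - 1) := by
    have : 0 ≤ τ - 1 := by linarith
    positivity
  have hnonneg : 0 ≤ α / t ^ 2 + C * τ * (τ - 1) * t ^ (τ - 2) := by positivity
  calc |-α / t ^ 2 - C * τ * (τ - 1) * t ^ (τ - 2)|
      = α * (1 / t ^ 2) + C * τ * (τ - 1) * t ^ (τ - 2) := by
        rw [show -α / t ^ 2 - C * τ * (τ - 1) * t ^ (τ - 2)
          = -(α / t ^ 2 + C * τ * (τ - 1) * t ^ (τ - 2)) by ring, abs_neg,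
          abs_of_nonneg hnonneg]; ring
    _ ≤ α * (4 * b ^ (τ - 2)) + C * τ * (τ - 1) * ((2 ^ (2 - τ) + 2 ^ (τ - 2)) * b ^ (τ - 2)) := by
        gcongr
    _ = weibullCurvatureBound C α τ * b ^ (τ - 2) := by
        simp only [weibullCurvatureBound]; ring

lemma weibull_eq_mul_exp (K : ℝ) {t : ℝ} (ht : 0 < t) :
    K * t ^ α * Real.exp (-C * t ^ τ) = K * Real.exp (weibullExponent C α τ t) := by
  rw [weibullExponent, Real.rpow_def_of_pos ht, mul_assoc, ← Real.exp_add]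
  ring_nf

lemma weibullScale_pos_and_le (hC : 0 < C) (hτ : 1 ≤ τ) {b : ℝ} (hb1 : 1 ≤ b)
    (hb2 : 2 * α / (C * τ) ≤ b) :
    0 < 1 / (C * τ * b ^ (τ - 1) - α / b) ∧
      1 / (C * τ * b ^ (τ - 1) - α / b) ≤ 2 / (C * τ) * b ^ (1 - τ) := by
  have hb0 : 0 < b := by linarith
  have hCτ : 0 < C * τ := by positivity
  have hbpow : 1 ≤ b ^ (τ - 1) := Real.one_le_rpow hb1 (by linarith)
  have hαb : α / b ≤ C * τ / 2 * b ^ (τ - 1) := by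
    rw [div_le_iff₀ hCτ] at hb2
    rw [div_le_iff₀ hb0]
    nlinarith [mul_le_mul_of_nonneg_left hbpow (by positivity : 0 ≤ C * τ / 2 * b)]
  have hd : C * τ / 2 * b ^ (τ - 1) ≤ C * τ * b ^ (τ - 1) - α / b := by linarith
  have hd0 : 0 < C * τ / 2 * b ^ (τ - 1) := by positivity
  refine ⟨one_div_pos.2 (hd0.trans_le hd), (one_div_le_one_div_of_le hd0 hd).trans_eq ?_⟩
  rw [Real.rpow_sub hb0, Real.rpow_one, Real.rpow_sub hb0, Real.rpow_one]
  field_simp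

lemma abs_weibullScale_mul_le (hC : 0 < C) (hτ : 1 ≤ τ) (x : ℝ) {b : ℝ} (hb1 : 1 ≤ b)
    (hb2 : 2 * α / (C * τ) ≤ b) (hb3 : 4 * |x| / (C * τ) ≤ b) :
    |1 / (C * τ * b ^ (τ - 1) - α / b) * x| ≤ 2 * |x| / (C * τ) * b ^ (1 - τ) ∧
      2 * |x| / (C * τ) * b ^ (1 - τ) ≤ b / 2 := by
  obtain ⟨ha0, haup⟩ := weibullScale_pos_and_le hC hτ hb1 hb2
  have hbpow : b ^ (1 - τ) ≤ 1 := Real.rpow_le_one_of_one_le_of_nonpos hb1 (by linarith)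
  constructor
  · rw [abs_mul, abs_of_pos ha0]
    calc _ ≤ 2 / (C * τ) * b ^ (1 - τ) * |x| := by gcongr
      _ = _ := by ring
  · calc _ ≤ 2 * |x| / (C * τ) * 1 := by gcongr
      _ = 4 * |x| / (C * τ) / 2 := by ring
      _ ≤ b / 2 := by gcongr

lemma abs_weibullExponent_sub_add_le (hC : 0 < C) (hα : 0 ≤ α) (hτ : 1 ≤ τ) (x : ℝ) {b : ℝ}
    (hb1 : 1 ≤ b) (hb2 : 2 * α / (C * τ) ≤ b) (hb3 : 4 * |x| / (C * τ) ≤ b) :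
    |weibullExponent C α τ (1 / (C * τ * b ^ (τ - 1) - α / b) * x + b) -
        weibullExponent C α τ b + x| ≤
      weibullCurvatureBound C α τ * (2 * |x| / (C * τ)) ^ 2 / b ^ τ := by
  obtain ⟨hr, hrb⟩ := abs_weibullScale_mul_le hC hτ x hb1 hb2 hb3
  have hd : 0 < C * τ * b ^ (τ - 1) - α / b :=
    one_div_pos.1 (weibullScale_pos_and_le hC hτ hb1 hb2).1
  set a := 1 / (C * τ * b ^ (τ - 1) - α / b)
  set r := 2 * |x| / (C * τ) * b ^ (1 - τ)
  have hb0 : 0 < b := by linarith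
  have hsub : ∀ t ∈ Icc (b - r) (b + r), t ∈ Icc (b / 2) (2 * b) := fun t ht =>
    ⟨by linarith [ht.1], by linarith [ht.2]⟩
  have hpos : ∀ t ∈ Icc (b - r) (b + r), 0 < t := fun t ht => by linarith [(hsub t ht).1]
  have hslope : (a * x + b - b) * weibullExponentDeriv C α τ b = -x := by
    have had : a * (C * τ * b ^ (τ - 1) - α / b) = 1 := one_div_mul_cancel hd.ne'
    simp only [weibullExponentDeriv]
    linear_combination (-x) * had
  have key := abs_sub_sub_mul_deriv_le (u := a * x + b)
    (fun t ht => hasDerivAt_weibullExponent (hpos t ht))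
    (fun t ht => hasDerivAt_weibullExponentDeriv (hpos t ht))
    (fun t ht => abs_weibullExponent_deriv2_le hC.le hα hτ hb1 (hsub t ht))
    (by rwa [add_sub_cancel_right])
  rw [hslope, sub_neg_eq_add] at key
  have hpow : b ^ (τ - 2) * (b ^ (1 - τ)) ^ 2 = 1 / b ^ τ := by
    rw [← Real.rpow_natCast, ← Real.rpow_mul hb0.le, ← Real.rpow_add hb0, one_div,
      ← Real.rpow_neg hb0.le]
    norm_num; ring_nf
  calc _ ≤ weibullCurvatureBound C α τ * b ^ (τ - 2) * r ^ 2 := key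
    _ = weibullCurvatureBound C α τ * (2 * |x| / (C * τ)) ^ 2 *
        (b ^ (τ - 2) * (b ^ (1 - τ)) ^ 2) := by ring
    _ = _ := by rw [hpow]; ring

lemma abs_mul_weibull_sub_exp_le (hC : 0 < C) (hα : 0 ≤ α) (hτ : 1 ≤ τ) (K x : ℝ) {n b M : ℝ}
    (hb1 : 1 ≤ b) (hb2 : 2 * α / (C * τ) ≤ b) (hb3 : 4 * |x| / (C * τ) ≤ b)
    (hb4 : weibullCurvatureBound C α τ * (2 * |x| / (C * τ)) ^ 2 ≤ b)
    (hM : 2 * (weibullCurvatureBound C α τ * (2 * |x| / (C * τ)) ^ 2) ≤ M)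
    (hn : n * (K * b ^ α * Real.exp (-C * b ^ τ)) = 1) :
    |n * (K * (1 / (C * τ * b ^ (τ - 1) - α / b) * x + b) ^ α *
        Real.exp (-C * (1 / (C * τ * b ^ (τ - 1) - α / b) * x + b) ^ τ)) - Real.exp (-x)| ≤
      M * Real.exp (-x) / b ^ τ := by
  set D := weibullCurvatureBound C α τ * (2 * |x| / (C * τ)) ^ 2
  set u := 1 / (C * τ * b ^ (τ - 1) - α / b) * x + b
  set ε := weibullExponent C α τ u - weibullExponent C α τ b + x
  have hb0 : 0 < b := by linarith
  have hbτ : 0 < b ^ τ := by positivity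
  have hε : |ε| ≤ D / b ^ τ := abs_weibullExponent_sub_add_le hC hα hτ x hb1 hb2 hb3
  have hD : 0 ≤ D := by
    have := (abs_nonneg ε).trans hε
    rwa [le_div_iff₀ hbτ, zero_mul] at this
  have hε1 : |ε| ≤ 1 := by
    have hbb : b ≤ b ^ τ := by
      simpa using Real.rpow_le_rpow_of_exponent_le hb1 hτ
    calc |ε| ≤ D / b ^ τ := hε
      _ ≤ b / b := by gcongr
      _ = 1 := div_self hb0.ne'
  have hu0 : 0 < u := by
    obtain ⟨hr, hrb⟩ := abs_weibullScale_mul_le hC hτ x hb1 hb2 hb3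
    linarith [(abs_le.1 (hr.trans hrb)).1]
  have hnu : n * (K * u ^ α * Real.exp (-C * u ^ τ)) = Real.exp ε * Real.exp (-x) := by
    rw [weibull_eq_mul_exp K hb0] at hn
    rw [weibull_eq_mul_exp K hu0, ← Real.exp_add]
    calc _ = n * (K * Real.exp (weibullExponent C α τ b)) *
          Real.exp (weibullExponent C α τ u - weibullExponent C α τ b) := by
          rw [mul_assoc, mul_assoc, ← Real.exp_add]; ring_nf
      _ = _ := by rw [hn, one_mul]; simp only [ε, add_neg_cancel_right]
  rw [hnu, ← sub_one_mul, abs_mul, abs_of_pos (Real.exp_pos _)]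
  calc |Real.exp ε - 1| * Real.exp (-x) ≤ 2 * (D / b ^ τ) * Real.exp (-x) := by
        gcongr; exact (Real.abs_exp_sub_one_le hε1).trans (by gcongr)
    _ ≤ M * Real.exp (-x) / b ^ τ := by
        rw [mul_div_assoc', div_mul_eq_mul_div]; gcongr

end Weibull

theorem stmt_19_general (K C α τ x₁ : ℝ) (hC : 0 < C) (hα : 0 < α) (hτ : 1 ≤ τ)
    (hanti : StrictAntiOn (fun x : ℝ => K * x ^ α * Real.exp (-C * x ^ τ)) (Set.Ici x₁))
    (hrange : ∀ x ≥ x₁, K * x ^ α * Real.exp (-C * x ^ τ) ∈ Set.Ioc (0 : ℝ) 1)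
    (b : ℕ → ℝ)
    (hb : ∀ᶠ n : ℕ in atTop,
      x₁ ≤ b n ∧ K * b n ^ α * Real.exp (-C * b n ^ τ) = 1 / (n : ℝ))
    (a : ℕ → ℝ) (ha : ∀ n, a n = 1 / (C * τ * b n ^ (τ - 1) - α / b n)) :
    ∀ x : ℝ, ∃ M > (0 : ℝ), ∃ N : ℕ, ∀ n ≥ N,
      |(n : ℝ) * (K * (a n * x + b n) ^ α * Real.exp (-C * (a n * x + b n) ^ τ))
          - Real.exp (-x)|
        ≤ M * Real.exp (-x) / b n ^ τ := by
  intro x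
  set D := weibullCurvatureBound C α τ * (2 * |x| / (C * τ)) ^ 2
  have hbtop : Tendsto b atTop atTop :=
    tendsto_atTop_of_antitoneOn_of_tendsto_zero hanti.antitoneOn (fun y hy => (hrange y hy).1)
      (hb.mono fun _ h => h.1)
      (tendsto_one_div_atTop_nhds_zero_nat.congr' (hb.mono fun _ h => h.2.symm))
  obtain ⟨N, hN⟩ := eventually_atTop.1 <| (hb.and (eventually_ge_atTop 1)).and <|
    hbtop.eventually_ge_atTop (max (max 1 (2 * α / (C * τ))) (max (4 * |x| / (C * τ)) D))
  refine ⟨max (2 * D) 1, lt_max_of_lt_right one_pos, N, fun n hn => ?_⟩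
  obtain ⟨⟨⟨-, hfb⟩, hn1⟩, hbn⟩ := hN n hn
  simp only [max_le_iff] at hbn
  rw [ha n]
  refine abs_mul_weibull_sub_exp_le hC hα.le hτ K x hbn.1.1 hbn.1.2 hbn.2.1 hbn.2.2
    (le_max_left _ _) ?_
  rw [hfb, mul_one_div_cancel (Nat.cast_ne_zero.2 (by omega))]

/-- Key estimate in the proof of Theorem 1.1:
`K(a_n x + b_n)^α exp(-C(a_n x + b_n)^τ) = (e^{-x}/n)(1 + O(1/b_n^τ))`, i.e.
`|n · K(a_n x + b_n)^α exp(-C(a_n x + b_n)^τ) - e^{-x}| ≤ M e^{-x}/b_n^τ` eventually. -/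
theorem stmt_19 (K C α τ x₁ : ℝ) (hK : 0 < K) (hC : 0 < C) (hα : 0 < α) (hτ : 1 ≤ τ)
    (hx₁ : 0 < x₁)
    (hanti : StrictAntiOn (fun x : ℝ => K * x ^ α * Real.exp (-C * x ^ τ)) (Set.Ici x₁))
    (hlim : Tendsto (fun x : ℝ => K * x ^ α * Real.exp (-C * x ^ τ)) atTop (nhds 0))
    (hrange : ∀ x ≥ x₁, K * x ^ α * Real.exp (-C * x ^ τ) ∈ Set.Ioc (0 : ℝ) 1)
    (b : ℕ → ℝ)
    (hb : ∀ᶠ n : ℕ in atTop,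
      x₁ ≤ b n ∧ K * b n ^ α * Real.exp (-C * b n ^ τ) = 1 / (n : ℝ))
    (a : ℕ → ℝ) (ha : ∀ n, a n = 1 / (C * τ * b n ^ (τ - 1) - α / b n)) :
    ∀ x : ℝ, ∃ M > (0 : ℝ), ∃ N : ℕ, ∀ n ≥ N,
      |(n : ℝ) * (K * (a n * x + b n) ^ α * Real.exp (-C * (a n * x + b n) ^ τ))
          - Real.exp (-x)|
        ≤ M * Real.exp (-x) / b n ^ τ :=
  stmt_19_general K C α τ x₁ hC hα hτ hanti hrange b hb a ha
end
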